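/- Let G be a graph with a fixed orientation of its edges, let T be a triangle (closed walk of length three) in G, and let f : V(G) → L. If f is continuous, then |∫_T df| ≤ 1; if moreover T is f-contractible, then ∫_T df = 0. -/

import Mathlib

/-!
Along any walk, the sign `ε_i` exactly compensates the orientation of `e_i`, so `∫_W df` is the
sum of the label increments `f(v_i) − f(v_{i−1})` (taken to be `0` when `⋆` is involved). For a
triangle this is a cyclic sum of three increments between pairwise adjacent vertices, and a check
over the `4³` label triples shows that it has absolute value at most `1` when no edge joins `−1`
and `1`, and vanishes when moreover no edge joins `0` and `⋆`.
-/

/-- A graph together with a fixed orientation of its edges: each edge `e` has a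
tail `e⁻` and a head `e⁺`. -/
structure OGraph : Type 1 where
  V : Type
  E : Type
  tail : E → V
  head : E → V

/-- The set of labels `L = {−1, 0, 1, ⋆}`. -/
inductive L : Type
  | neg | zero | pos | star
deriving DecidableEq

/-- The integer value of a label (with junk value `0` at `⋆`). -/
def L.toInt : L → ℤ
  | .neg => -1
  | .zero => 0
  | .pos => 1
  | .star => 0

/-- Two vertices are adjacent if some edge has them as its two endpoints. -/
def OGraph.Adj (G : OGraph) (u v : G.V) : Prop :=
  ∃ e : G.E, (G.tail e = u ∧ G.head e = v) ∨ (G.tail e = v ∧ G.head e = u)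

/-- `f` is continuous on `S`: no edge of `G` between vertices of `S` joins the
values `−1` and `1`. -/
def OContinuousOn (G : OGraph) (f : G.V → L) (S : Set G.V) : Prop :=
  ∀ u v : G.V, u ∈ S → v ∈ S → G.Adj u v → ¬(f u = L.neg ∧ f v = L.pos)

/-- `f` is holomorphic on `S`: it is continuous on `S` and moreover no edge of `G`
between vertices of `S` joins the values `0` and `⋆`. -/
def OHolomorphicOn (G : OGraph) (f : G.V → L) (S : Set G.V) : Prop :=
  OContinuousOn G f S ∧
  ∀ u v : G.V, u ∈ S → v ∈ S → G.Adj u v → ¬(f u = L.zero ∧ f v = L.star)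

/-- `f` is entire on `S`: it is continuous on `S` and takes no value `⋆` on `S`. -/
def OEntireOn (G : OGraph) (f : G.V → L) (S : Set G.V) : Prop :=
  OContinuousOn G f S ∧ ∀ v ∈ S, f v ≠ L.star

/-- The derivative `df : E(G) → ℤ`: `df(e) = f(e⁺) − f(e⁻)` if neither endpoint has value
`⋆`, and `df(e) = 0` otherwise. -/
def dF (G : OGraph) (f : G.V → L) (e : G.E) : ℤ :=
  if f (G.tail e) = L.star ∨ f (G.head e) = L.star then 0
  else (f (G.head e)).toInt - (f (G.tail e)).toInt

/-- A walk `(v₀, e₁, v₁, …, e_n, v_n)` in `G`, not necessarily respecting the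
orientation: each edge `e_i` joins `v_{i−1}` and `v_i` (in one of the two directions). -/
structure OWalk (G : OGraph) where
  n : ℕ
  v : Fin (n + 1) → G.V
  e : Fin n → G.E
  valid : ∀ i : Fin n,
    (G.tail (e i) = v i.castSucc ∧ G.head (e i) = v i.succ) ∨
    (G.head (e i) = v i.castSucc ∧ G.tail (e i) = v i.succ)

open scoped Classical in
/-- `I_W = Σ_i ε_i`, where `ε_i(e_i) = +1` if `v_i = e_i⁺`, `ε_i(e_i) = −1` if
`v_i = e_i⁻`, and `ε_i(e) = 0` for `e ≠ e_i`. -/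
noncomputable def OWalk.I {G : OGraph} (W : OWalk G) (e' : G.E) : ℤ :=
  ∑ i : Fin W.n,
    if W.e i = e' then (if G.head (W.e i) = W.v i.succ then 1 else -1) else 0

/-- `∫_W h = Σ_{e ∈ E(G)} I_W(e) · h(e)`. -/
noncomputable def intW {G : OGraph} [Fintype G.E] (W : OWalk G) (h : G.E → ℤ) : ℤ :=
  ∑ e : G.E, W.I e * h e

namespace L

def delta (a b : L) : ℤ :=
  if a = star ∨ b = star then 0 else b.toInt - a.toInt

theorem delta_swap (a b : L) : delta b a = -delta a b := by
  cases a <;> cases b <;> decide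

def ContinuousPair (a b : L) : Prop :=
  ¬(a = neg ∧ b = pos) ∧ ¬(b = neg ∧ a = pos)

def HolomorphicPair (a b : L) : Prop :=
  ContinuousPair a b ∧ ¬(a = zero ∧ b = star) ∧ ¬(b = zero ∧ a = star)

theorem abs_delta_cycle_le_one {a b c : L} (hab : ContinuousPair a b)
    (hbc : ContinuousPair b c) (hca : ContinuousPair c a) :
    |delta a b + delta b c + delta c a| ≤ 1 := by
  revert hab hbc hca
  unfold ContinuousPair
  cases a <;> cases b <;> cases c <;> decide

theorem delta_cycle_eq_zero {a b c : L} (hab : HolomorphicPair a b)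
    (hbc : HolomorphicPair b c) (hca : HolomorphicPair c a) :
    delta a b + delta b c + delta c a = 0 := by
  revert hab hbc hca
  unfold HolomorphicPair ContinuousPair
  cases a <;> cases b <;> cases c <;> decide

end L

theorem OGraph.Adj.symm {G : OGraph} {u v : G.V} (h : G.Adj u v) : G.Adj v u :=
  let ⟨e, he⟩ := h; ⟨e, he.symm⟩

theorem OContinuousOn.continuousPair {G : OGraph} {f : G.V → L} {S : Set G.V}
    (hf : OContinuousOn G f S) {u v : G.V} (hu : u ∈ S) (hv : v ∈ S) (huv : G.Adj u v) :
    L.ContinuousPair (f u) (f v) :=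
  ⟨hf u v hu hv huv, hf v u hv hu huv.symm⟩

theorem OHolomorphicOn.holomorphicPair {G : OGraph} {f : G.V → L} {S : Set G.V}
    (hf : OHolomorphicOn G f S) {u v : G.V} (hu : u ∈ S) (hv : v ∈ S) (huv : G.Adj u v) :
    L.HolomorphicPair (f u) (f v) :=
  ⟨hf.1.continuousPair hu hv huv, hf.2 u v hu hv huv, hf.2 v u hv hu huv.symm⟩

namespace OWalk

variable {G : OGraph}

theorem adj (W : OWalk G) (i : Fin W.n) : G.Adj (W.v i.castSucc) (W.v i.succ) :=
  ⟨W.e i, (W.valid i).imp id And.symm⟩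

open scoped Classical in
theorem intW_eq_sum [Fintype G.E] (W : OWalk G) (h : G.E → ℤ) :
    intW W h = ∑ i : Fin W.n,
      (if G.head (W.e i) = W.v i.succ then 1 else -1) * h (W.e i) := by
  unfold intW OWalk.I
  simp_rw [Finset.sum_mul, ite_mul, zero_mul]
  rw [Finset.sum_comm]
  simp

theorem intW_dF_eq_sum_delta [Fintype G.E] (W : OWalk G) (f : G.V → L) :
    intW W (dF G f) = ∑ i : Fin W.n, L.delta (f (W.v i.castSucc)) (f (W.v i.succ)) := by
  classical
  rw [intW_eq_sum]
  refine Finset.sum_congr rfl fun i _ => ?_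
  change _ * L.delta _ _ = _
  rcases W.valid i with ⟨ht, hh⟩ | ⟨hh, ht⟩
  · rw [if_pos hh, one_mul, ht, hh]
  · by_cases hloop : G.head (W.e i) = W.v i.succ
    -- a loop traversed against its orientation: both endpoints coincide
    · rw [if_pos hloop, one_mul, ht, hh, ← hh.symm.trans hloop]
    · rw [if_neg hloop, ht, hh, L.delta_swap, neg_one_mul, neg_neg]

theorem exists_triangle [Fintype G.E] (T : OWalk G) (hT3 : T.n = 3)
    (hclosed : T.v (Fin.last T.n) = T.v 0) :
    ∃ a b c, a ∈ Set.range T.v ∧ b ∈ Set.range T.v ∧ c ∈ Set.range T.v ∧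
      G.Adj a b ∧ G.Adj b c ∧ G.Adj c a ∧
      ∀ f : G.V → L,
        intW T (dF G f) = L.delta (f a) (f b) + L.delta (f b) (f c) + L.delta (f c) (f a) := by
  obtain ⟨n, v, e, valid⟩ := T
  subst hT3
  have h30 : v 3 = v 0 := hclosed
  have hadj := adj ⟨3, v, e, valid⟩
  refine ⟨v 0, v 1, v 2, ⟨0, rfl⟩, ⟨1, rfl⟩, ⟨2, rfl⟩, hadj 0, hadj 1,
    h30 ▸ (hadj 2 : G.Adj (v 2) (v 3)), fun f => ?_⟩
  rw [intW_dF_eq_sum_delta, Fin.sum_univ_three]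
  change L.delta (f (v 0)) (f (v 1)) + L.delta (f (v 1)) (f (v 2))
    + L.delta (f (v 2)) (f (v 3)) = _
  rw [h30]

end OWalk

/-- Let `T` be a triangle (a closed walk of length three) in `G` and let `f` be
continuous.  Then `|∫_T df| ≤ 1`, and if moreover `T` is `f`-contractible (i.e. `f` is
holomorphic on the vertices of `T`), then `∫_T df = 0`. -/
theorem stmt_5 (G : OGraph) [Fintype G.E] (T : OWalk G)
    (hT3 : T.n = 3) (hclosed : T.v (Fin.last T.n) = T.v 0)
    (f : G.V → L) (hcont : OContinuousOn G f Set.univ) :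
    |intW T (dF G f)| ≤ 1 ∧
    (OHolomorphicOn G f (Set.range T.v) → intW T (dF G f) = 0) := by
  obtain ⟨a, b, c, ha, hb, hc, hab, hbc, hca, hint⟩ := T.exists_triangle hT3 hclosed
  rw [hint]
  exact ⟨L.abs_delta_cycle_le_one (hcont.continuousPair trivial trivial hab)
    (hcont.continuousPair trivial trivial hbc) (hcont.continuousPair trivial trivial hca),
    fun hhol => L.delta_cycle_eq_zero (hhol.holomorphicPair ha hb hab)
      (hhol.holomorphicPair hb hc hbc) (hhol.holomorphicPair hc ha hca)⟩
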